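/- For all integers ℓ ≥ 1 and all integers j, the identity Σ_k (-1)^k k [k choose k-j] C(ℓ-1, k-1) = Σ_k (-1)^k [k+1 choose k-j] C(ℓ, k) holds, where [n choose k] are the Stirling cycle numbers and the sums range over all integers k for which the terms are nonzero. -/

import Mathlib

/-- Stirling cycle numbers. -/
def stirCycle : ℕ → ℤ → ℝ
  | 0, k => if k = 0 then 1 else 0
  | n+1, k => stirCycle n (k - 1) + (n : ℝ) * stirCycle n k

/-!
With `a k = (-1)^k [k+1, k-j]`, the rule `k [k, k-j] = [k+1, k-j] - [k, k-j-1]` turns the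
left-hand summand into `(a (k-1) + a k) C(ℓ-1, k-1)`, and Pascal's rule
(`Finset.sum_choose_succ_mul`) folds this sum into `∑ a k C(ℓ, k)`.
-/

theorem stirCycle_succ (n : ℕ) (k : ℤ) :
    stirCycle (n + 1) k = stirCycle n (k - 1) + n * stirCycle n k :=
  rfl

theorem natCast_mul_stirCycle (n : ℕ) (k : ℤ) :
    n * stirCycle n k = stirCycle (n + 1) k - stirCycle n (k - 1) := by
  rw [stirCycle_succ]; ring

theorem Finset.sum_range_succ_of_eq_zero {M : Type*} [AddCommMonoid M] (f : ℕ → M) (n : ℕ)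
    (hf : f n = 0) : ∑ k ∈ range (n + 1), f k = ∑ k ∈ range n, f k := by
  rw [sum_range_succ, hf, add_zero]

/-- Σ_k (-1)^k k [k, k-j] C(ℓ-1, k-1) = Σ_k (-1)^k [k+1, k-j] C(ℓ, k).
Both sums over all integers k; all nonzero terms have 0 ≤ k ≤ ℓ + 1, so summing
over k ∈ {0, …, ℓ+1} captures every nonzero term. -/
theorem stmt10 (ℓ : ℕ) (hℓ : 1 ≤ ℓ) (j : ℤ) :
    ∑ k ∈ Finset.range (ℓ + 2),
        (-1 : ℝ) ^ k * (k : ℝ) * stirCycle k ((k : ℤ) - j) * (Nat.choose (ℓ - 1) (k - 1) : ℝ)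
      = ∑ k ∈ Finset.range (ℓ + 2),
          (-1 : ℝ) ^ k * stirCycle (k + 1) ((k : ℤ) - j) * (Nat.choose ℓ k : ℝ) := by
  obtain ⟨m, rfl⟩ := Nat.exists_eq_add_of_le' hℓ
  set a : ℕ → ℝ := fun k ↦ (-1) ^ k * stirCycle (k + 1) (k - j)
  have hterm (i : ℕ) : (-1 : ℝ) ^ (i + 1) * ((i + 1 : ℕ) : ℝ) * stirCycle (i + 1) ((i + 1 : ℕ) - j)
      = a i + a (i + 1) := by
    rw [mul_assoc, natCast_mul_stirCycle]
    simp only [a]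
    push_cast
    rw [show (i : ℤ) + 1 - j - 1 = i - j by ring]
    ring
  calc _ = ∑ i ∈ Finset.range (m + 1), (a i + a (i + 1)) * (m.choose i : ℝ) := by
        rw [Finset.sum_range_succ', Finset.sum_range_succ_of_eq_zero]
        · simp only [Nat.add_sub_cancel, hterm, Nat.cast_zero, mul_zero, zero_mul, add_zero]
        · simp
    _ = ∑ k ∈ Finset.range (m + 2), ((m + 1).choose k : ℝ) * a k := by
        rw [Finset.sum_choose_succ_mul (fun i _ ↦ a i), ← Finset.sum_add_distrib]
        exact Finset.sum_congr rfl fun i _ ↦ by ring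
    _ = _ := by
        rw [Finset.sum_range_succ_of_eq_zero _ (m + 2)]
        · exact Finset.sum_congr rfl fun k _ ↦ by simp only [a]; ring
        · simp
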